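/- Let q ≥ 1 be an integer and let (s_j)_{j=0}^∞ be a Stieltjes positive definite sequence of complex q×q matrices with Stieltjes parametrization (𝔮_j)_{j=0}^∞ and Dyukarev–Stieltjes parameters [(𝔏_k)_{k=0}^∞, (𝔐_k)_{k=0}^∞]. Then for every m ∈ ℕ₀: ∏_{j=0}^{m} 𝔮_{2j}^{−1} 𝔮_{2j+1} = (∏_{j=0}^{m} 𝔐_j 𝔏_j)^{−1} and ∏_{j=0}^{m} 𝔮_{2j} 𝔮_{2j+1}^{−1} = (∏_{j=0}^{m} 𝔐_j 𝔏_j)^*. -/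

import Mathlib

open Matrix
open scoped ComplexOrder

noncomputable section

/-- The space of complex `q × q` matrices. -/
abbrev Mq (q : ℕ) := Matrix (Fin q) (Fin q) ℂ

/-- The space of complex `2q × 2q` matrices, written in `q × q` blocks. -/
abbrev M2q (q : ℕ) := Matrix (Fin q ⊕ Fin q) (Fin q ⊕ Fin q) ℂ

/-- Block Hankel matrix `H_n = (s_{j+k})_{j,k=0}^n`. -/
def Hmat (q : ℕ) (s : ℕ → Mq q) (n : ℕ) :
    Matrix (Fin (n + 1) × Fin q) (Fin (n + 1) × Fin q) ℂ :=
  Matrix.of fun p r => s (p.1.1 + r.1.1) p.2 r.2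

/-- Block Hankel matrix `K_n = (s_{j+k+1})_{j,k=0}^n`. -/
def Kmat (q : ℕ) (s : ℕ → Mq q) (n : ℕ) :
    Matrix (Fin (n + 1) × Fin q) (Fin (n + 1) × Fin q) ℂ :=
  Matrix.of fun p r => s (p.1.1 + r.1.1 + 1) p.2 r.2

/-- A sequence of complex `q × q` matrices is Stieltjes positive definite if all the
block Hankel matrices `H_n` and `K_n` are positive definite (in particular Hermitian). -/
def IsStieltjesPD (q : ℕ) (s : ℕ → Mq q) : Prop :=
  ∀ n : ℕ, (Hmat q s n).PosDef ∧ (Kmat q s n).PosDef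

/-- Even Stieltjes parameters `𝔮_{2k}` (Schur complements `L_k`). -/
def qEven (q : ℕ) (s : ℕ → Mq q) : ℕ → Mq q
  | 0 => s 0
  | k + 1 =>
      s (2 * (k + 1)) -
        (Matrix.of fun (a : Fin q) (r : Fin (k + 1) × Fin q) => s (k + 1 + r.1.1) a r.2) *
          (Hmat q s k)⁻¹ *
          (Matrix.of fun (p : Fin (k + 1) × Fin q) (b : Fin q) => s (k + 1 + p.1.1) p.2 b)

/-- Odd Stieltjes parameters `𝔮_{2k+1}` (Schur complements `Λ_k`). -/
def qOdd (q : ℕ) (s : ℕ → Mq q) : ℕ → Mq q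
  | 0 => s 1
  | k + 1 =>
      s (2 * (k + 1) + 1) -
        (Matrix.of fun (a : Fin q) (r : Fin (k + 1) × Fin q) => s (k + 2 + r.1.1) a r.2) *
          (Kmat q s k)⁻¹ *
          (Matrix.of fun (p : Fin (k + 1) × Fin q) (b : Fin q) => s (k + 2 + p.1.1) p.2 b)

/-- Stieltjes parametrization `𝔮_j`. -/
def qpar (q : ℕ) (s : ℕ → Mq q) (j : ℕ) : Mq q :=
  if j % 2 = 0 then qEven q s (j / 2) else qOdd q s (j / 2)

/-- Reciprocal sequence `s^♯`. -/
def reciprocal (q : ℕ) (s : ℕ → Mq q) : ℕ → Mq q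
  | 0 => (s 0)⁻¹
  | j + 1 =>
      -(s 0)⁻¹ *
        ∑ l ∈ (Finset.range (j + 1)).attach, s (j + 1 - l.1) * reciprocal q s l.1
  decreasing_by exact Finset.mem_range.mp l.2

/-- First Kátětov transform `s^{(1)}_j = −s_0 s_{j+1}^♯ s_0`. -/
def katetov1 (q : ℕ) (s : ℕ → Mq q) : ℕ → Mq q :=
  fun j => -(s 0) * reciprocal q s (j + 1) * s 0

/-- `ℓ`-th Kátětov transform (the `ℓ`-fold iterate of the first Kátětov transform). -/
def katetov (q : ℕ) (ℓ : ℕ) (s : ℕ → Mq q) : ℕ → Mq q :=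
  (katetov1 q)^[ℓ] s

/-- `v_k = col(I_q, 0_{kq×q})`. -/
def vcol (q k : ℕ) : Matrix (Fin (k + 1) × Fin q) (Fin q) ℂ :=
  Matrix.of fun p b => if p.1.1 = 0 ∧ p.2 = b then 1 else 0

/-- `y_{0,k} = col(s_0, …, s_k)`. -/
def ycol (q : ℕ) (s : ℕ → Mq q) (k : ℕ) : Matrix (Fin (k + 1) × Fin q) (Fin q) ℂ :=
  Matrix.of fun p b => s p.1.1 p.2 b

/-- Dyukarev–Stieltjes parameters `𝔐_k`. -/
def DSM (q : ℕ) (s : ℕ → Mq q) : ℕ → Mq q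
  | 0 => (s 0)⁻¹
  | k + 1 =>
      (vcol q (k + 1))ᴴ * (Hmat q s (k + 1))⁻¹ * vcol q (k + 1) -
        (vcol q k)ᴴ * (Hmat q s k)⁻¹ * vcol q k

/-- Dyukarev–Stieltjes parameters `𝔏_k`. -/
def DSL (q : ℕ) (s : ℕ → Mq q) : ℕ → Mq q
  | 0 => s 0 * (s 1)⁻¹ * s 0
  | k + 1 =>
      (ycol q s (k + 1))ᴴ * (Kmat q s (k + 1))⁻¹ * ycol q s (k + 1) -
        (ycol q s k)ᴴ * (Kmat q s k)⁻¹ * ycol q s k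

/-- Ordered product `A_0 A_1 ⋯ A_n`. -/
def oprod {α : Type*} [Monoid α] (f : ℕ → α) (n : ℕ) : α :=
  ((List.range (n + 1)).map f).prod

/-- Block shift `T_n = (δ_{j,k+1} I_q)_{j,k=0}^n`. -/
def Tmat (q n : ℕ) : Matrix (Fin (n + 1) × Fin q) (Fin (n + 1) × Fin q) ℂ :=
  Matrix.of fun p r => if p.1.1 = r.1.1 + 1 ∧ p.2 = r.2 then 1 else 0

/-- `R_n(z) = (I_{(n+1)q} − z T_n)⁻¹`. -/
def Rmat (q n : ℕ) (z : ℂ) : Matrix (Fin (n + 1) × Fin q) (Fin (n + 1) × Fin q) ℂ :=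
  (1 - z • Tmat q n)⁻¹

/-- `u_0 = 0`, `u_n = col(0_{q×q}, −y_{0,n−1})`. -/
def ucol (q : ℕ) (s : ℕ → Mq q) (n : ℕ) : Matrix (Fin (n + 1) × Fin q) (Fin q) ℂ :=
  Matrix.of fun p b => if p.1.1 = 0 then 0 else -(s (p.1.1 - 1) p.2 b)

/-- `col(−H_n⁻¹ y_{n+1,2n+1}, I_q)` of size `(n+2)q × q`. -/
def colH (q : ℕ) (s : ℕ → Mq q) (n : ℕ) : Matrix (Fin (n + 2) × Fin q) (Fin q) ℂ :=
  Matrix.of fun p b =>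
    if h : p.1.1 < n + 1 then
      (-((Hmat q s n)⁻¹ *
          Matrix.of fun (r : Fin (n + 1) × Fin q) (c : Fin q) => s (n + 1 + r.1.1) r.2 c))
        (⟨p.1.1, h⟩, p.2) b
    else if p.2 = b then 1 else 0

/-- `col(−K_n⁻¹ y_{n+2,2n+2}, I_q)` of size `(n+2)q × q`. -/
def colK (q : ℕ) (s : ℕ → Mq q) (n : ℕ) : Matrix (Fin (n + 2) × Fin q) (Fin q) ℂ :=
  Matrix.of fun p b =>
    if h : p.1.1 < n + 1 then
      (-((Kmat q s n)⁻¹ *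
          Matrix.of fun (r : Fin (n + 1) × Fin q) (c : Fin q) => s (n + 2 + r.1.1) r.2 c))
        (⟨p.1.1, h⟩, p.2) b
    else if p.2 = b then 1 else 0

/-- `z_{0,n} = row(s_0, …, s_n)`. -/
def zrow (q : ℕ) (s : ℕ → Mq q) (n : ℕ) : Matrix (Fin q) (Fin (n + 1) × Fin q) ℂ :=
  Matrix.of fun a r => s r.1.1 a r.2

/-- Orthogonal matrix polynomials `P_n`. -/
def Ppoly (q : ℕ) (s : ℕ → Mq q) : ℕ → ℂ → Mq q
  | 0, _ => 1
  | n + 1, z => (vcol q (n + 1))ᴴ * (Rmat q (n + 1) (starRingEnd ℂ z))ᴴ * colH q s n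

/-- Second kind matrix polynomials `Q_n`. -/
def Qpoly (q : ℕ) (s : ℕ → Mq q) : ℕ → ℂ → Mq q
  | 0, _ => 0
  | n + 1, z => -((ucol q s (n + 1))ᴴ * (Rmat q (n + 1) (starRingEnd ℂ z))ᴴ * colH q s n)

/-- Matrix polynomials `P̂_n`. -/
def Phat (q : ℕ) (s : ℕ → Mq q) : ℕ → ℂ → Mq q
  | 0, _ => 1
  | n + 1, z => (vcol q (n + 1))ᴴ * (Rmat q (n + 1) (starRingEnd ℂ z))ᴴ * colK q s n

/-- Matrix polynomials `Q̂_n`. -/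
def Qhat (q : ℕ) (s : ℕ → Mq q) : ℕ → ℂ → Mq q
  | 0, _ => s 0
  | n + 1, z => zrow q s (n + 1) * (Rmat q (n + 1) (starRingEnd ℂ z))ᴴ * colK q s n

/-- `α_n(z)`. -/
def alphaP (q : ℕ) (s : ℕ → Mq q) (n : ℕ) (z : ℂ) : Mq q :=
  1 - z • ((ucol q s n)ᴴ * (Rmat q n (starRingEnd ℂ z))ᴴ * (Hmat q s n)⁻¹ * vcol q n)

/-- `γ_n(z)`. -/
def gammaP (q : ℕ) (s : ℕ → Mq q) (n : ℕ) (z : ℂ) : Mq q :=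
  -(z • ((vcol q n)ᴴ * (Rmat q n (starRingEnd ℂ z))ᴴ * (Hmat q s n)⁻¹ * vcol q n))

/-- `β_n(z)`. -/
def betaP (q : ℕ) (s : ℕ → Mq q) : ℕ → ℂ → Mq q
  | 0, _ => 0
  | n + 1, z => (ycol q s n)ᴴ * (Rmat q n (starRingEnd ℂ z))ᴴ * (Kmat q s n)⁻¹ * ycol q s n

/-- `δ_n(z)`. -/
def deltaP (q : ℕ) (s : ℕ → Mq q) : ℕ → ℂ → Mq q
  | 0, _ => 1
  | n + 1, z =>
      1 + z • ((vcol q n)ᴴ * (Rmat q n (starRingEnd ℂ z))ᴴ * (Kmat q s n)⁻¹ * ycol q s n)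

/-- The resolvent matrices `U_m(z)`. -/
def Umat (q : ℕ) (s : ℕ → Mq q) (m : ℕ) (z : ℂ) : M2q q :=
  if m % 2 = 0 then
    Matrix.fromBlocks (alphaP q s (m / 2) z) (betaP q s (m / 2) z)
      (gammaP q s (m / 2) z) (deltaP q s (m / 2) z)
  else
    Matrix.fromBlocks (alphaP q s (m / 2) z) (betaP q s (m / 2 + 1) z)
      (gammaP q s (m / 2) z) (deltaP q s (m / 2 + 1) z)

/-- `𝕄_k(z) = [[I, 0], [−z𝔐_k, I]]`. -/
def MM (q : ℕ) (s : ℕ → Mq q) (k : ℕ) (z : ℂ) : M2q q :=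
  Matrix.fromBlocks 1 0 (-(z • DSM q s k)) 1

/-- `𝕃_k = [[I, 𝔏_k], [0, I]]`. -/
def LL (q : ℕ) (s : ℕ → Mq q) (k : ℕ) : M2q q :=
  Matrix.fromBlocks 1 (DSL q s k) 0 1

/-- `𝒫_n = diag([P_n(0)]^{−*}, P_n(0))`. -/
def PPmat (q : ℕ) (s : ℕ → Mq q) (n : ℕ) : M2q q :=
  Matrix.fromBlocks (((Ppoly q s n 0)⁻¹)ᴴ) 0 0 (Ppoly q s n 0)

/-- `𝐐_n(z) = [[0, Q̂_n(0)], [−z[Q̂_n(0)]^{−*}, 0]]`. -/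
def QQgen (q : ℕ) (s : ℕ → Mq q) (n : ℕ) (z : ℂ) : M2q q :=
  Matrix.fromBlocks 0 (Qhat q s n 0) (-(z • ((Qhat q s n 0)⁻¹)ᴴ)) 0

/-- `𝐐_0^{(ℓ)}(z) = [[0, s_0^{(ℓ)}], [−z(s_0^{(ℓ)})⁻¹, 0]]`. -/
def QQ0 (q : ℕ) (s : ℕ → Mq q) (ℓ : ℕ) (z : ℂ) : M2q q :=
  Matrix.fromBlocks 0 (katetov q ℓ s 0) (-(z • (katetov q ℓ s 0)⁻¹)) 0

/-- `𝒬_m(z) = 𝐐_0^{(0)}(z) ⋯ 𝐐_0^{(m)}(z)`. -/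
def Qprod (q : ℕ) (s : ℕ → Mq q) (m : ℕ) (z : ℂ) : M2q q :=
  oprod (fun ℓ => QQ0 q s ℓ z) m

/-!
Write `a_k := P_k(0)` and `b_k := Q̂_k(0)`. Bordering `H_k` (resp. `K_k`) by one block row and
column and inverting through the Schur complement gives `𝔐_k = a_k 𝔮_{2k}⁻¹ a_kᴴ` and
`𝔏_k = b_k 𝔮_{2k+1}⁻¹ b_kᴴ`. Because of the Hankel structure, the solution of
`H_{n+1} x = y_{n+2,2n+3}` is obtained from the solutions of the systems of size `n`, and similarly
for `K_{n+1}`; reading off suitable blocks yields `a_{k+1} = -a_k 𝔮_{2k}⁻¹ 𝔮_{2k+1}` and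
`b_{k+1} = -b_k 𝔮_{2k+1}⁻¹ 𝔮_{2k+2}`. Hence `a_kᴴ b_k = 𝔮_{2k}`, so `𝔐_k 𝔏_k = -a_k a_{k+1}⁻¹`,
`𝔮_{2k}⁻¹ 𝔮_{2k+1} = -a_k⁻¹ a_{k+1}` and `𝔮_{2k} 𝔮_{2k+1}⁻¹ = -a_kᴴ (a_{k+1}ᴴ)⁻¹`, and the three
products telescope.
-/

namespace Matrix

theorem fromRows_add {m₁ m₂ n α : Type*} [Add α] (A₁ B₁ : Matrix m₁ n α)
    (A₂ B₂ : Matrix m₂ n α) :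
    fromRows A₁ A₂ + fromRows B₁ B₂ = fromRows (A₁ + B₁) (A₂ + B₂) := by
  ext (i | i) j <;> rfl

theorem submatrix_mul_id {l m n p α : Type*} [Fintype n] [Mul α] [AddCommMonoid α]
    (M : Matrix m n α) (N : Matrix n p α) (e : l → m) :
    (M * N).submatrix e id = M.submatrix e id * N :=
  rfl

theorem mul_eq_submatrix_mul_submatrix {l m n o α : Type*} [Fintype m] [Fintype o] [Mul α]
    [AddCommMonoid α] (M : Matrix l m α) (N : Matrix m n α) (e : o ≃ m) :
    M * N = M.submatrix id e * N.submatrix e id := by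
  simp

theorem submatrix_id_eq_iff {l m n α : Type*} {A B : Matrix m n α} (e : l ≃ m) :
    A.submatrix e id = B.submatrix e id ↔ A = B :=
  ⟨fun h => by simpa using congrArg (·.submatrix e.symm id) h, fun h => h ▸ rfl⟩

section BlockInverse

variable {l m n α : Type*} [Fintype m] [DecidableEq m] [Fintype n] [DecidableEq n]

theorem PosDef.schur_complement_of_fromBlocks {𝕜 : Type*} [RCLike 𝕜] {A : Matrix m m 𝕜}
    {B : Matrix m n 𝕜} {C : Matrix n m 𝕜} {D : Matrix n n 𝕜}
    (h : (fromBlocks A B C D).PosDef) : (D - C * A⁻¹ * B).PosDef := by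
  obtain ⟨-, rfl, -, -⟩ := isHermitian_fromBlocks_iff.1 h.isHermitian
  have hA : A.PosDef := h.submatrix Sum.inl_injective
  have := hA.isUnit.invertible
  refine ((PosDef.fromBlocks₁₁ B D hA).1 h.posSemidef).posDef_iff_isUnit.2 ?_
  have hdet := det_fromBlocks₁₁ A B Bᴴ D
  rw [invOf_eq_nonsing_inv] at hdet
  rw [isUnit_iff_isUnit_det]
  exact isUnit_of_mul_isUnit_right (hdet ▸ (isUnit_iff_isUnit_det _).1 h.isUnit)

variable [CommRing α] [StarRing α]

theorem conjTranspose_submatrix_mul_inv_submatrix_mul_submatrix (A : Matrix m m α)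
    (X : Matrix m l α) (e : n ≃ m) :
    (X.submatrix e id)ᴴ * (A.submatrix e e)⁻¹ * X.submatrix e id = Xᴴ * A⁻¹ * X := by
  rw [inv_submatrix_equiv, conjTranspose_submatrix, submatrix_mul_equiv, submatrix_mul_equiv,
    submatrix_id_id]

theorem conjTranspose_fromRows_mul_inv_fromBlocks_mul_fromRows {A : Matrix m m α}
    {B : Matrix m n α} {C : Matrix n m α} {D : Matrix n n α}
    (hM : (fromBlocks A B C D).IsHermitian) (hA : IsUnit A) (hS : IsUnit (D - C * A⁻¹ * B))
    (u : Matrix m l α) (w : Matrix n l α) :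
    (fromRows u w)ᴴ * (fromBlocks A B C D)⁻¹ * fromRows u w =
      uᴴ * A⁻¹ * u + (wᴴ - uᴴ * A⁻¹ * B) * (D - C * A⁻¹ * B)⁻¹ * (wᴴ - uᴴ * A⁻¹ * B)ᴴ := by
  obtain ⟨hAH, rfl, -, -⟩ := isHermitian_fromBlocks_iff.1 hM
  have := hA.invertible
  have : Invertible (D - Bᴴ * ⅟A * B) := by rw [invOf_eq_nonsing_inv]; exact hS.invertible
  have := fromBlocks₁₁Invertible A B Bᴴ D
  rw [← invOf_eq_nonsing_inv, invOf_fromBlocks₁₁_eq]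
  simp only [invOf_eq_nonsing_inv, conjTranspose_fromRows_eq_fromCols_conjTranspose,
    fromCols_mul_fromBlocks, fromCols_mul_fromRows, conjTranspose_sub, conjTranspose_mul,
    conjTranspose_conjTranspose, conjTranspose_nonsing_inv, hAH.eq, Matrix.mul_add,
    Matrix.add_mul, Matrix.mul_sub, Matrix.sub_mul, Matrix.mul_neg, Matrix.neg_mul,
    Matrix.mul_assoc]
  abel

end BlockInverse

end Matrix

theorem oprod_zero {M : Type*} [Monoid M] (f : ℕ → M) : oprod f 0 = f 0 := by
  simp [oprod]

theorem oprod_succ {M : Type*} [Monoid M] (f : ℕ → M) (n : ℕ) :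
    oprod f (n + 1) = oprod f n * f (n + 1) := by
  simp [oprod, List.range_succ, mul_assoc]

theorem oprod_eq_neg_one_pow_mul_of_telescope {R : Type*} [Ring R] {f x y : ℕ → R}
    (hf : ∀ j, f j = -(x j * y (j + 1))) (h : ∀ j, y (j + 1) * x (j + 1) = 1) (m : ℕ) :
    oprod f m = (-1) ^ (m + 1) * (x 0 * y (m + 1)) := by
  induction m with
  | zero => simp [oprod_zero, hf]
  | succ m ih =>
    rw [oprod_succ, ih, hf]
    calc (-1) ^ (m + 1) * (x 0 * y (m + 1)) * -(x (m + 1) * y (m + 1 + 1))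
        = (-1) ^ (m + 1 + 1) * (x 0 * (y (m + 1) * x (m + 1)) * y (m + 1 + 1)) := by
          simp [pow_succ, mul_assoc]
      _ = (-1) ^ (m + 1 + 1) * (x 0 * y (m + 1 + 1)) := by rw [h, mul_one]

namespace Matrix

section NegOnePow

variable {n α : Type*} [Fintype n] [DecidableEq n] [CommRing α]

theorem inv_neg_one_pow_mul (k : ℕ) {A : Matrix n n α} (hA : IsUnit A) :
    ((-1) ^ k * A)⁻¹ = (-1) ^ k * A⁻¹ := by
  have := hA.invertible
  refine inv_eq_left_inv ?_
  rw [((Commute.neg_one_left _).pow_left k).symm.mul_mul_mul_comm, ← pow_add, ← two_mul, pow_mul,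
    neg_one_sq, one_pow, inv_mul_of_invertible, Matrix.one_mul]

theorem conjTranspose_neg_one_pow_mul [StarRing α] (k : ℕ) (A : Matrix n n α) :
    ((-1) ^ k * A)ᴴ = (-1) ^ k * Aᴴ := by
  rw [conjTranspose_mul, conjTranspose_pow, conjTranspose_neg, conjTranspose_one,
    ((Commute.neg_one_left _).pow_left k).eq]

end NegOnePow

section StieltjesProducts

variable {n α : Type*} [Fintype n] [DecidableEq n] [CommRing α]
  {Q a : ℕ → Matrix n n α} (hQ : ∀ j, IsUnit (Q j))
  (ha0 : a 0 = 1) (ha : ∀ k, a (k + 1) = -(a k * ((Q (2 * k))⁻¹ * Q (2 * k + 1))))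
include hQ ha0 ha

theorem isUnit_of_eq_neg_mul_inv_mul : ∀ k, IsUnit (a k)
  | 0 => ha0 ▸ isUnit_one
  | k + 1 => ha k ▸ ((isUnit_of_eq_neg_mul_inv_mul k).mul
      ((isUnit_nonsing_inv_iff.2 (hQ _)).mul (hQ _))).neg

theorem inv_mul_succ_eq_neg_inv_mul (k : ℕ) :
    (a k)⁻¹ * a (k + 1) = -((Q (2 * k))⁻¹ * Q (2 * k + 1)) := by
  have := (isUnit_of_eq_neg_mul_inv_mul hQ ha0 ha k).invertible
  rw [ha, Matrix.mul_neg, inv_mul_cancel_left_of_invertible]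

variable [StarRing α] (hQH : ∀ j, (Q j).IsHermitian)
include hQH

theorem conjTranspose_mul_inv_conjTranspose_succ_eq_neg_mul_inv (k : ℕ) :
    (a k)ᴴ * ((a (k + 1))ᴴ)⁻¹ = -(Q (2 * k) * (Q (2 * k + 1))⁻¹) := by
  have := (isUnit_of_eq_neg_mul_inv_mul hQ ha0 ha (k + 1)).star.invertible
  have := (hQ (2 * k)).invertible
  have := (hQ (2 * k + 1)).invertible
  rw [mul_inv_eq_iff_eq_mul_of_invertible, ha, conjTranspose_neg, conjTranspose_mul,
    conjTranspose_mul, conjTranspose_nonsing_inv, (hQH _).eq, (hQH _).eq]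
  simp [Matrix.mul_assoc]

variable {b : ℕ → Matrix n n α} (hb0 : b 0 = Q 0)
  (hb : ∀ k, b (k + 1) = -(b k * ((Q (2 * k + 1))⁻¹ * Q (2 * k + 2))))
include hb0 hb

theorem conjTranspose_mul_eq_of_eq_neg_mul_inv_mul : ∀ k, (a k)ᴴ * b k = Q (2 * k)
  | 0 => by rw [ha0, hb0, conjTranspose_one, Matrix.one_mul]
  | k + 1 => by
    have ih := conjTranspose_mul_eq_of_eq_neg_mul_inv_mul k
    have := (hQ (2 * k)).invertible
    have := (hQ (2 * k + 1)).invertible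
    rw [ha, hb, conjTranspose_neg, conjTranspose_mul, conjTranspose_mul,
      conjTranspose_nonsing_inv, (hQH _).eq, (hQH _).eq]
    simp only [neg_mul_neg, Matrix.mul_assoc, ← Matrix.mul_assoc _ (b k), ih]
    simp [mul_add]

theorem mul_inv_mul_conjTranspose_mul_mul_inv_mul_conjTranspose (k : ℕ) :
    a k * (Q (2 * k))⁻¹ * (a k)ᴴ * (b k * (Q (2 * k + 1))⁻¹ * (b k)ᴴ) =
      -(a k * (a (k + 1))⁻¹) := by
  have hab := conjTranspose_mul_eq_of_eq_neg_mul_inv_mul hQ ha0 ha hQH hb0 hb k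
  have hba : (b k)ᴴ * a k = Q (2 * k) := by
    rw [← (hQH _).eq, ← hab, conjTranspose_mul, conjTranspose_conjTranspose]
  have := (isUnit_of_eq_neg_mul_inv_mul hQ ha0 ha (k + 1)).invertible
  have := (hQ (2 * k)).invertible
  have := (hQ (2 * k + 1)).invertible
  have hab' (X : Matrix n n α) : (a k)ᴴ * (b k * X) = Q (2 * k) * X := by
    rw [← Matrix.mul_assoc, hab]
  have hba' (X : Matrix n n α) : (b k)ᴴ * (a k * X) = Q (2 * k) * X := by
    rw [← Matrix.mul_assoc, hba]
  calc _ = a k * (Q (2 * k))⁻¹ * (a k)ᴴ * (b k * (Q (2 * k + 1))⁻¹ * (b k)ᴴ) * a (k + 1) *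
        (a (k + 1))⁻¹ := (mul_inv_cancel_right_of_invertible (a (k + 1)) _).symm
    _ = -(a k) * (a (k + 1))⁻¹ := by
      rw [ha k]
      simp [Matrix.mul_assoc, hab', hba']
    _ = _ := Matrix.neg_mul _ _

theorem oprod_inv_mul_eq_inv_oprod_and_oprod_mul_inv_eq_conjTranspose_oprod
    {M L : ℕ → Matrix n n α} (hM : ∀ k, M k = a k * (Q (2 * k))⁻¹ * (a k)ᴴ)
    (hL : ∀ k, L k = b k * (Q (2 * k + 1))⁻¹ * (b k)ᴴ) (m : ℕ) :
    oprod (fun j => (Q (2 * j))⁻¹ * Q (2 * j + 1)) m = (oprod (fun j => M j * L j) m)⁻¹ ∧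
      oprod (fun j => Q (2 * j) * (Q (2 * j + 1))⁻¹) m = (oprod (fun j => M j * L j) m)ᴴ := by
  have hunit := isUnit_of_eq_neg_mul_inv_mul hQ ha0 ha
  have hML : oprod (fun j => M j * L j) m = (-1) ^ (m + 1) * (a (m + 1))⁻¹ := by
    rw [oprod_eq_neg_one_pow_mul_of_telescope (x := a) (y := fun j => (a j)⁻¹)
      (fun j => by rw [hM, hL, mul_inv_mul_conjTranspose_mul_mul_inv_mul_conjTranspose hQ ha0 ha
        hQH hb0 hb])
      (fun j => nonsing_inv_mul _ ((isUnit_iff_isUnit_det _).1 (hunit _))), ha0, Matrix.one_mul]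
  have h₁ : oprod (fun j => (Q (2 * j))⁻¹ * Q (2 * j + 1)) m = (-1) ^ (m + 1) * a (m + 1) := by
    rw [oprod_eq_neg_one_pow_mul_of_telescope (x := fun j => (a j)⁻¹) (y := a)
      (fun j => by rw [inv_mul_succ_eq_neg_inv_mul hQ ha0 ha, neg_neg])
      (fun j => mul_nonsing_inv _ ((isUnit_iff_isUnit_det _).1 (hunit _))), ha0, inv_one,
      Matrix.one_mul]
  have h₂ : oprod (fun j => Q (2 * j) * (Q (2 * j + 1))⁻¹) m =
      (-1) ^ (m + 1) * ((a (m + 1))ᴴ)⁻¹ := by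
    rw [oprod_eq_neg_one_pow_mul_of_telescope (x := fun j => (a j)ᴴ) (y := fun j => ((a j)ᴴ)⁻¹)
      (fun j => by rw [conjTranspose_mul_inv_conjTranspose_succ_eq_neg_mul_inv hQ ha0 ha hQH,
        neg_neg])
      (fun j => nonsing_inv_mul _ ((isUnit_iff_isUnit_det _).1 (hunit _).star)), ha0,
      conjTranspose_one, Matrix.one_mul]
  have := (hunit (m + 1)).invertible
  rw [hML, h₁, h₂, inv_neg_one_pow_mul _ (isUnit_nonsing_inv_iff.2 (hunit _)),
    inv_inv_of_invertible, conjTranspose_neg_one_pow_mul, conjTranspose_nonsing_inv]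
  exact ⟨rfl, rfl⟩

end StieltjesProducts

end Matrix

def lastBlockEquiv (q n : ℕ) : (Fin (n + 1) × Fin q) ⊕ Fin q ≃ Fin (n + 2) × Fin q :=
  ((Equiv.refl _).sumCongr (Equiv.uniqueProd (Fin q) (Fin 1)).symm).trans <|
    (Equiv.sumProdDistrib _ _ _).symm.trans <| finSumFinEquiv.prodCongr (Equiv.refl _)

@[simp]
theorem lastBlockEquiv_inl {q n : ℕ} (x : Fin (n + 1) × Fin q) :
    lastBlockEquiv q n (Sum.inl x) = (x.1.castSucc, x.2) :=
  rfl

@[simp]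
theorem lastBlockEquiv_inr {q n : ℕ} (b : Fin q) :
    lastBlockEquiv q n (Sum.inr b) = (Fin.last (n + 1), b) :=
  rfl

/-- `ycolFrom q s k n = y_{k,k+n}` and `zrowFrom q s k n = z_{k,k+n}`. -/
def ycolFrom (q : ℕ) (s : ℕ → Mq q) (k n : ℕ) : Matrix (Fin (n + 1) × Fin q) (Fin q) ℂ :=
  Matrix.of fun p b => s (k + p.1.1) p.2 b

def zrowFrom (q : ℕ) (s : ℕ → Mq q) (k n : ℕ) : Matrix (Fin q) (Fin (n + 1) × Fin q) ℂ :=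
  Matrix.of fun a r => s (k + r.1.1) a r.2

def hankelSol (q : ℕ) (s : ℕ → Mq q) (n : ℕ) : Matrix (Fin (n + 1) × Fin q) (Fin q) ℂ :=
  (Hmat q s n)⁻¹ * ycolFrom q s (n + 1) n

/-- `col(0_{q×q}, X)`. -/
def shiftDown {q n : ℕ} (X : Matrix (Fin (n + 1) × Fin q) (Fin q) ℂ) :
    Matrix (Fin (n + 2) × Fin q) (Fin q) ℂ :=
  (1 : Matrix (Fin (n + 2) × Fin q) (Fin (n + 2) × Fin q) ℂ).submatrix id (Prod.map Fin.succ id) *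
    X

section BlockStructure

variable {q : ℕ} (s : ℕ → Mq q) (k n : ℕ)

theorem Kmat_eq_Hmat_shift : Kmat q s n = Hmat q (fun j => s (j + 1)) n :=
  rfl

theorem qOdd_eq_qEven_shift : qOdd q s = qEven q (fun j => s (j + 1)) := by
  ext (_ | i) : 1
  · rfl
  · simp only [qOdd, qEven, Kmat, Hmat]
    ring_nf

theorem qEven_succ : qEven q s (n + 1) =
    s (2 * (n + 1)) - zrowFrom q s (n + 1) n * (Hmat q s n)⁻¹ * ycolFrom q s (n + 1) n :=
  rfl

theorem qpar_two_mul (j : ℕ) : qpar q s (2 * j) = qEven q s j := by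
  simp [qpar]

theorem qpar_two_mul_add_one (j : ℕ) : qpar q s (2 * j + 1) = qOdd q s j := by
  rw [qpar, if_neg (by omega), show (2 * j + 1) / 2 = j by omega]

theorem colK_eq_colH_shift : colK q s n = colH q (fun j => s (j + 1)) n := by
  ext p b
  simp only [colK, colH, Kmat, Hmat]
  ring_nf

theorem ycolFrom_shift : ycolFrom q (fun j => s (j + 1)) k n = ycolFrom q s (k + 1) n := by
  ext ⟨i, a⟩ b
  simp only [ycolFrom, of_apply]
  ring_nf

theorem Hmat_succ_submatrix_lastBlockEquiv :
    (Hmat q s (n + 1)).submatrix (lastBlockEquiv q n) (lastBlockEquiv q n) =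
      fromBlocks (Hmat q s n) (ycolFrom q s (n + 1) n) (zrowFrom q s (n + 1) n)
        (s (2 * (n + 1))) := by
  ext (⟨i, a⟩ | a) (⟨j, b⟩ | b) <;>
    simp only [Hmat, ycolFrom, zrowFrom, submatrix_apply, lastBlockEquiv_inl, lastBlockEquiv_inr,
      of_apply, Fin.val_castSucc, Fin.val_last, fromBlocks_apply₁₁, fromBlocks_apply₁₂,
      fromBlocks_apply₂₁, fromBlocks_apply₂₂] <;>
    ring_nf

theorem Hmat_succ_submatrix_lastBlockEquiv_succ :
    (Hmat q s (n + 1)).submatrix (lastBlockEquiv q n) (Prod.map Fin.succ id) =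
      fromRows (Hmat q (fun j => s (j + 1)) n) (zrowFrom q (fun j => s (j + 1)) (n + 1) n) := by
  ext (⟨i, a⟩ | a) ⟨j, b⟩ <;>
    simp only [Hmat, zrowFrom, submatrix_apply, lastBlockEquiv_inl, lastBlockEquiv_inr,
      Prod.map_apply, id_eq, of_apply, Fin.val_castSucc, Fin.val_last, Fin.val_succ,
      fromRows_apply_inl, fromRows_apply_inr] <;>
    ring_nf

theorem Hmat_shift_succ_submatrix_lastBlockEquiv :
    (Hmat q (fun j => s (j + 1)) (n + 1)).submatrix (lastBlockEquiv q n) id =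
      fromRows ((Hmat q s (n + 1)).submatrix (Prod.map Fin.succ id) id)
        (zrowFrom q s (n + 1 + 1) (n + 1)) := by
  ext (⟨i, a⟩ | a) ⟨j, b⟩ <;>
    simp only [Hmat, zrowFrom, submatrix_apply, lastBlockEquiv_inl, lastBlockEquiv_inr,
      Prod.map_apply, id_eq, of_apply, Fin.val_castSucc, Fin.val_last, Fin.val_succ,
      fromRows_apply_inl, fromRows_apply_inr] <;>
    ring_nf

theorem ycolFrom_succ_submatrix_lastBlockEquiv :
    (ycolFrom q s k (n + 1)).submatrix (lastBlockEquiv q n) id =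
      fromRows (ycolFrom q s k n) (s (k + (n + 1))) := by
  ext (⟨i, a⟩ | a) b <;> simp [ycolFrom]

theorem ycolFrom_succ_submatrix_succ :
    (ycolFrom q s k (n + 1)).submatrix (Prod.map Fin.succ id) id = ycolFrom q s (k + 1) n := by
  ext ⟨i, a⟩ b
  simp only [ycolFrom, submatrix_apply, Prod.map_apply, id_eq, of_apply, Fin.val_succ]
  ring_nf

theorem ycol_succ_submatrix_lastBlockEquiv :
    (ycol q s (n + 1)).submatrix (lastBlockEquiv q n) id = fromRows (ycol q s n) (s (n + 1)) := by
  ext (⟨i, a⟩ | a) b <;> simp [ycol]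

theorem zrow_succ_submatrix_lastBlockEquiv :
    (zrow q s (n + 1)).submatrix id (lastBlockEquiv q n) = fromCols (zrow q s n) (s (n + 1)) := by
  ext a (⟨i, b⟩ | b) <;> simp [zrow]

theorem vcol_succ_submatrix_lastBlockEquiv :
    (vcol q (n + 1)).submatrix (lastBlockEquiv q n) id = fromRows (vcol q n) 0 := by
  ext (⟨i, a⟩ | a) b <;> simp [vcol]

theorem colH_submatrix_lastBlockEquiv :
    (colH q s n).submatrix (lastBlockEquiv q n) id = fromRows (-hankelSol q s n) 1 := by
  ext (⟨i, a⟩ | a) b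
  · simp [colH, hankelSol, ycolFrom, i.is_le]
  · simp [colH, one_apply]

theorem Hmat_zero :
    Hmat q s 0 = (s 0).submatrix (Equiv.uniqueProd (Fin q) (Fin 1))
      (Equiv.uniqueProd (Fin q) (Fin 1)) := by
  ext ⟨i, a⟩ ⟨j, b⟩
  simp [Hmat, Fin.fin_one_eq_zero]

theorem ycolFrom_zero :
    ycolFrom q s k 0 = (s k).submatrix (Equiv.uniqueProd (Fin q) (Fin 1)) id := by
  ext ⟨i, a⟩ b
  simp [ycolFrom, Fin.fin_one_eq_zero]

theorem zrowFrom_zero :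
    zrowFrom q s k 0 = (s k).submatrix id (Equiv.uniqueProd (Fin q) (Fin 1)) := by
  ext a ⟨i, b⟩
  simp [zrowFrom, Fin.fin_one_eq_zero]

theorem zrow_zero : zrow q s 0 = (s 0).submatrix id (Equiv.uniqueProd (Fin q) (Fin 1)) := by
  ext a ⟨i, b⟩
  simp [zrow, Fin.fin_one_eq_zero]

theorem conjTranspose_vcol_mul {m : Type*} (M : Matrix (Fin (n + 1) × Fin q) m ℂ) :
    (vcol q n)ᴴ * M = M.submatrix (fun b => (0, b)) id := by
  ext a b
  simp [vcol, mul_apply, Fintype.sum_prod_type, ite_and, apply_ite (starRingEnd ℂ)]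

theorem zrow_eq_conjTranspose_vcol_mul_Hmat : zrow q s n = (vcol q n)ᴴ * Hmat q s n := by
  rw [conjTranspose_vcol_mul]
  ext a r
  simp [zrow, Hmat]

theorem conjTranspose_vcol_mul_ycolFrom : (vcol q n)ᴴ * ycolFrom q s k n = s k := by
  rw [conjTranspose_vcol_mul]
  ext a b
  simp [ycolFrom]

theorem mul_shiftDown {m : Type*} (M : Matrix m (Fin (n + 2) × Fin q) ℂ)
    (X : Matrix (Fin (n + 1) × Fin q) (Fin q) ℂ) :
    M * shiftDown X = M.submatrix id (Prod.map Fin.succ id) * X := by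
  rw [shiftDown, ← Matrix.mul_assoc]
  congr 1
  exact mul_submatrix_one (Equiv.refl _) _ M

theorem conjTranspose_vcol_mul_shiftDown (X : Matrix (Fin (n + 1) × Fin q) (Fin q) ℂ) :
    (vcol q (n + 1))ᴴ * shiftDown X = 0 := by
  have : (vcol q (n + 1))ᴴ.submatrix id (Prod.map Fin.succ id) = 0 := by
    ext a ⟨i, b⟩
    simp [vcol]
  rw [mul_shiftDown, this, Matrix.zero_mul]

theorem isHermitian_of_Hmat (hH : ∀ n, (Hmat q s n).IsHermitian) (j : ℕ) :
    (s j).IsHermitian := by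
  ext a b
  simpa [Hmat] using congrFun (congrFun (hH j) (0, a)) (Fin.last j, b)

theorem conjTranspose_ycol (hsH : ∀ j, (s j).IsHermitian) : (ycol q s n)ᴴ = zrow q s n := by
  ext a r
  simp [ycol, zrow, (hsH _).apply]

theorem Ppoly_succ_apply_zero :
    Ppoly q s (n + 1) 0 = (vcol q (n + 1))ᴴ * colH q s n := by
  simp [Ppoly, Rmat]

theorem Qhat_succ_apply_zero : Qhat q s (n + 1) 0 = zrow q s (n + 1) * colK q s n := by
  simp [Qhat, Rmat]

theorem conjTranspose_vcol_succ_mul_colH :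
    (vcol q (n + 1))ᴴ * colH q s n = -((vcol q n)ᴴ * hankelSol q s n) := by
  rw [mul_eq_submatrix_mul_submatrix _ _ (lastBlockEquiv q n), ← conjTranspose_submatrix,
    vcol_succ_submatrix_lastBlockEquiv, colH_submatrix_lastBlockEquiv]
  simp [conjTranspose_fromRows_eq_fromCols_conjTranspose, fromCols_mul_fromRows]

theorem zrow_succ_mul_colK :
    zrow q s (n + 1) * colK q s n =
      s (n + 1) - zrow q s n * hankelSol q (fun j => s (j + 1)) n := by
  rw [mul_eq_submatrix_mul_submatrix _ _ (lastBlockEquiv q n), zrow_succ_submatrix_lastBlockEquiv,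
    colK_eq_colH_shift, colH_submatrix_lastBlockEquiv, fromCols_mul_fromRows]
  simp [sub_eq_neg_add]

end BlockStructure

section SchurComplements

variable {q : ℕ} (s : ℕ → Mq q)

theorem qEven_posDef (hH : ∀ n, (Hmat q s n).PosDef) : ∀ n, (qEven q s n).PosDef
  | 0 => by
    have h := (hH 0).submatrix (Equiv.uniqueProd (Fin q) (Fin 1)).symm.injective
    rwa [Hmat_zero, submatrix_submatrix, Equiv.self_comp_symm, submatrix_id_id] at h
  | n + 1 => by
    have h := (hH (n + 1)).submatrix (lastBlockEquiv q n).injective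
    rw [Hmat_succ_submatrix_lastBlockEquiv] at h
    exact PosDef.schur_complement_of_fromBlocks h

theorem qEven_one : qEven q s 1 = s 2 - s 1 * ((s 0)⁻¹ * s 1) := by
  rw [qEven_succ, zrowFrom_zero, Hmat_zero, ycolFrom_zero, inv_submatrix_equiv,
    submatrix_mul_equiv, submatrix_mul_equiv, submatrix_id_id, Matrix.mul_assoc]

theorem hankelSol_zero :
    hankelSol q s 0 = ((s 0)⁻¹ * s 1).submatrix (Equiv.uniqueProd (Fin q) (Fin 1)) id := by
  rw [hankelSol, Hmat_zero, ycolFrom_zero, inv_submatrix_equiv, submatrix_mul_equiv]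

theorem zrowFrom_mul_hankelSol (n : ℕ) :
    zrowFrom q s (n + 1) n * hankelSol q s n = s (2 * (n + 1)) - qEven q s (n + 1) := by
  rw [qEven_succ, hankelSol, Matrix.mul_assoc, sub_sub_cancel]

theorem Hmat_mul_hankelSol {n : ℕ} (h : IsUnit (Hmat q s n)) :
    Hmat q s n * hankelSol q s n = ycolFrom q s (n + 1) n := by
  have := h.invertible
  rw [hankelSol, mul_inv_cancel_left_of_invertible]

theorem Hmat_succ_mul_colH {n : ℕ} (h : IsUnit (Hmat q s n)) :
    (Hmat q s (n + 1) * colH q s n).submatrix (lastBlockEquiv q n) id =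
      fromRows 0 (qEven q s (n + 1)) := by
  rw [← submatrix_mul_equiv _ _ _ (lastBlockEquiv q n), Hmat_succ_submatrix_lastBlockEquiv,
    colH_submatrix_lastBlockEquiv, fromBlocks_mul_fromRows, Matrix.mul_neg, Matrix.mul_neg,
    Hmat_mul_hankelSol s h, zrowFrom_mul_hankelSol]
  simp

theorem Hmat_succ_mul_shiftDown {n : ℕ} (X : Matrix (Fin (n + 1) × Fin q) (Fin q) ℂ) :
    (Hmat q s (n + 1) * shiftDown X).submatrix (lastBlockEquiv q n) id =
      fromRows (Hmat q (fun j => s (j + 1)) n * X)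
        (zrowFrom q (fun j => s (j + 1)) (n + 1) n * X) := by
  rw [mul_shiftDown, ← fromRows_mul, ← Hmat_succ_submatrix_lastBlockEquiv_succ]
  rfl

theorem Hmat_shift_succ_mul {n : ℕ} (X : Matrix (Fin (n + 2) × Fin q) (Fin q) ℂ) :
    (Hmat q (fun j => s (j + 1)) (n + 1) * X).submatrix (lastBlockEquiv q n) id =
      fromRows ((Hmat q s (n + 1) * X).submatrix (Prod.map Fin.succ id) id)
        (zrowFrom q s (n + 1 + 1) (n + 1) * X) := by
  rw [submatrix_mul_id, Hmat_shift_succ_submatrix_lastBlockEquiv, fromRows_mul]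
  rfl

end SchurComplements

section Recursions

variable {q : ℕ} {s : ℕ → Mq q} (hs : IsStieltjesPD q s)
include hs

theorem IsStieltjesPD.posDef_Hmat_shift (n : ℕ) : (Hmat q (fun j => s (j + 1)) n).PosDef :=
  (hs n).2

theorem qOdd_posDef (n : ℕ) : (qOdd q s n).PosDef :=
  qOdd_eq_qEven_shift s ▸ qEven_posDef (fun j => s (j + 1)) hs.posDef_Hmat_shift n

theorem qpar_posDef (j : ℕ) : (qpar q s j).PosDef := by
  unfold qpar
  split_ifs
  · exact qEven_posDef s (fun n => (hs n).1) _
  · exact qOdd_posDef hs _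

/-- Both sides solve `H_{n+1} x = y_{n+2,2n+3}`: the first summand gets all block rows but the
last one right, and the second one corrects the last block row. -/
theorem hankelSol_succ (n : ℕ) :
    hankelSol q s (n + 1) = shiftDown (hankelSol q (fun j => s (j + 1)) n) +
      colH q s n * ((qEven q s (n + 1))⁻¹ * qOdd q s (n + 1)) := by
  have := (hs (n + 1)).1.isUnit.invertible
  have := (qEven_posDef s (fun n => (hs n).1) (n + 1)).isUnit.invertible
  rw [hankelSol, inv_mul_eq_iff_eq_mul_of_invertible, ← submatrix_id_eq_iff (lastBlockEquiv q n),
    Matrix.mul_add, submatrix_add, Pi.add_apply, Pi.add_apply, Hmat_succ_mul_shiftDown,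
    ← Matrix.mul_assoc, submatrix_mul_id, Hmat_succ_mul_colH s (hs n).1.isUnit,
    ycolFrom_succ_submatrix_lastBlockEquiv, Hmat_mul_hankelSol _ (hs.posDef_Hmat_shift n).isUnit,
    zrowFrom_mul_hankelSol, ← qOdd_eq_qEven_shift, fromRows_mul, fromRows_add, Matrix.zero_mul,
    add_zero, mul_inv_cancel_left_of_invertible, sub_add_cancel, ycolFrom_shift]
  ring_nf

/-- Both sides solve `K_{n+1} x = y_{n+3,2n+4}`: the block rows `0, …, n` of `K_{n+1}` are the
block rows `1, …, n+1` of `H_{n+1}`, so the first summand is right except in the last block row,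
which the second one corrects. -/
theorem hankelSol_shift_succ (n : ℕ) :
    hankelSol q (fun j => s (j + 1)) (n + 1) = hankelSol q s (n + 1) +
      colK q s n * ((qOdd q s (n + 1))⁻¹ * qEven q s (n + 2)) := by
  have := (hs.posDef_Hmat_shift (n + 1)).isUnit.invertible
  have := (qOdd_posDef hs (n + 1)).isUnit.invertible
  rw [hankelSol, inv_mul_eq_iff_eq_mul_of_invertible, ← submatrix_id_eq_iff (lastBlockEquiv q n),
    Matrix.mul_add, submatrix_add, Pi.add_apply, Pi.add_apply, Hmat_shift_succ_mul,
    Hmat_mul_hankelSol s (hs (n + 1)).1.isUnit, ycolFrom_succ_submatrix_succ,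
    zrowFrom_mul_hankelSol, ← Matrix.mul_assoc, submatrix_mul_id, colK_eq_colH_shift,
    Hmat_succ_mul_colH _ (hs.posDef_Hmat_shift n).isUnit, ← qOdd_eq_qEven_shift,
    ycolFrom_succ_submatrix_lastBlockEquiv, ycolFrom_shift, fromRows_mul, fromRows_add,
    Matrix.zero_mul, add_zero, mul_inv_cancel_left_of_invertible, sub_add_cancel]
  ring_nf

theorem Ppoly_succ_zero : ∀ n, Ppoly q s (n + 1) 0 =
    -(Ppoly q s n 0 * ((qEven q s n)⁻¹ * qOdd q s n))
  | 0 => by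
    rw [Ppoly_succ_apply_zero, conjTranspose_vcol_succ_mul_colH, hankelSol_zero,
      conjTranspose_vcol_mul]
    simp [Ppoly, qEven, qOdd]
  | n + 1 => by
    rw [Ppoly_succ_apply_zero, conjTranspose_vcol_succ_mul_colH, hankelSol_succ hs,
      Matrix.mul_add, conjTranspose_vcol_mul_shiftDown, zero_add, ← Matrix.mul_assoc,
      ← Ppoly_succ_apply_zero]

theorem Qhat_succ_zero : ∀ n, Qhat q s (n + 1) 0 =
    -(Qhat q s n 0 * ((qOdd q s n)⁻¹ * qEven q s (n + 1)))
  | 0 => by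
    have : Invertible (s 0) := (qEven_posDef s (fun n => (hs n).1) 0).isUnit.invertible
    have : Invertible (s 1) := (qOdd_posDef hs 0).isUnit.invertible
    rw [Qhat_succ_apply_zero, zrow_succ_mul_colK, hankelSol_zero, zrow_zero, submatrix_mul_equiv,
      submatrix_id_id, qEven_one]
    simp [Qhat, qOdd, Matrix.mul_sub]
  | n + 1 => by
    rw [Qhat_succ_apply_zero, zrow_succ_mul_colK, hankelSol_shift_succ hs, Matrix.mul_add,
      zrow_eq_conjTranspose_vcol_mul_Hmat, Matrix.mul_assoc,
      Hmat_mul_hankelSol s (hs (n + 1)).1.isUnit, conjTranspose_vcol_mul_ycolFrom,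
      ← zrow_eq_conjTranspose_vcol_mul_Hmat, ← Matrix.mul_assoc, ← Qhat_succ_apply_zero]
    abel

end Recursions

section DyukarevStieltjes

variable {q : ℕ} {s : ℕ → Mq q}

theorem DSM_eq (hH : ∀ n, (Hmat q s n).PosDef) :
    ∀ k, DSM q s k = Ppoly q s k 0 * (qEven q s k)⁻¹ * (Ppoly q s k 0)ᴴ
  | 0 => by simp [DSM, Ppoly, qEven]
  | k + 1 => by
    have hM := (hH (k + 1)).submatrix (lastBlockEquiv q k).injective
    rw [Hmat_succ_submatrix_lastBlockEquiv] at hM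
    rw [DSM, ← conjTranspose_submatrix_mul_inv_submatrix_mul_submatrix _ _ (lastBlockEquiv q k),
      Hmat_succ_submatrix_lastBlockEquiv, vcol_succ_submatrix_lastBlockEquiv,
      conjTranspose_fromRows_mul_inv_fromBlocks_mul_fromRows hM.isHermitian (hH k).isUnit
        (qEven_posDef s hH (k + 1)).isUnit,
      conjTranspose_zero, zero_sub, Matrix.mul_assoc _ _ (ycolFrom _ _ _ _), ← hankelSol,
      ← conjTranspose_vcol_succ_mul_colH, ← Ppoly_succ_apply_zero, ← qEven_succ]
    abel

theorem DSL_eq (hs : IsStieltjesPD q s) :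
    ∀ k, DSL q s k = Qhat q s k 0 * (qOdd q s k)⁻¹ * (Qhat q s k 0)ᴴ
  | 0 => by
    simp [DSL, Qhat, qOdd, (isHermitian_of_Hmat s (fun n => (hs n).1.isHermitian) 0).eq]
  | k + 1 => by
    have hsH := isHermitian_of_Hmat s (fun n => (hs n).1.isHermitian)
    have hM := (hs.posDef_Hmat_shift (k + 1)).submatrix (lastBlockEquiv q k).injective
    rw [Hmat_succ_submatrix_lastBlockEquiv] at hM
    rw [DSL, Kmat_eq_Hmat_shift, Kmat_eq_Hmat_shift,
      ← conjTranspose_submatrix_mul_inv_submatrix_mul_submatrix _ _ (lastBlockEquiv q k),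
      Hmat_succ_submatrix_lastBlockEquiv, ycol_succ_submatrix_lastBlockEquiv,
      conjTranspose_fromRows_mul_inv_fromBlocks_mul_fromRows hM.isHermitian
        (hs.posDef_Hmat_shift k).isUnit (qEven_posDef _ hs.posDef_Hmat_shift (k + 1)).isUnit,
      conjTranspose_ycol s k hsH, (hsH _).eq, Matrix.mul_assoc _ _ (ycolFrom _ _ _ _),
      ← hankelSol, ← zrow_succ_mul_colK, ← Qhat_succ_apply_zero,
      ← qEven_succ (fun j => s (j + 1)), ← qOdd_eq_qEven_shift]
    abel

end DyukarevStieltjes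

theorem stmt6_general (q : ℕ) (s : ℕ → Mq q) (hs : IsStieltjesPD q s) (m : ℕ) :
    oprod (fun j => (qpar q s (2 * j))⁻¹ * qpar q s (2 * j + 1)) m =
        (oprod (fun j => DSM q s j * DSL q s j) m)⁻¹ ∧
      oprod (fun j => qpar q s (2 * j) * (qpar q s (2 * j + 1))⁻¹) m =
        (oprod (fun j => DSM q s j * DSL q s j) m)ᴴ := by
  have hq := qpar_posDef hs
  refine oprod_inv_mul_eq_inv_oprod_and_oprod_mul_inv_eq_conjTranspose_oprod
    (a := fun k => Ppoly q s k 0) (b := fun k => Qhat q s k 0) (fun j => (hq j).isUnit) rfl ?_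
    (fun j => (hq j).isHermitian) (qpar_two_mul s 0).symm ?_ ?_ ?_ m
  · intro k
    rw [qpar_two_mul, qpar_two_mul_add_one, Ppoly_succ_zero hs]
  · intro k
    rw [qpar_two_mul_add_one, show 2 * k + 2 = 2 * (k + 1) by ring, qpar_two_mul,
      Qhat_succ_zero hs]
  · intro k
    rw [qpar_two_mul, DSM_eq fun n => (hs n).1]
  · intro k
    rw [qpar_two_mul_add_one, DSL_eq hs]

/-- Products of Stieltjes parameters versus products of Dyukarev–Stieltjes parameters. -/
theorem stmt6 (q : ℕ) (hq : 1 ≤ q) (s : ℕ → Mq q) (hs : IsStieltjesPD q s) (m : ℕ) :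
    oprod (fun j => (qpar q s (2 * j))⁻¹ * qpar q s (2 * j + 1)) m =
        (oprod (fun j => DSM q s j * DSL q s j) m)⁻¹ ∧
      oprod (fun j => qpar q s (2 * j) * (qpar q s (2 * j + 1))⁻¹) m =
        (oprod (fun j => DSM q s j * DSL q s j) m)ᴴ :=
  stmt6_general q s hs m

end
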